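/- arXiv:2304.08864 — 3 statements merged into one kernel-verified Lean document; each statement's English description precedes it below -/
import Mathlib

section
/- The Weighted Balanced LIKE mechanism is strategy-proof for two agents with 0/1 utilities, for arbitrary positive weights: with n = 2 agents having weights w_1, w_2 > 0 and utilities u_i(F_k) ∈ {0,1}, for any fixed bid sets of agent 2 and any alternative bids that agent 1 could report, agent 1's expected total utility (with respect to her true utilities u_1) in the Weighted Balanced LIKE process when bidding truthfully (bidding for F_k iff u_1(F_k) = 1) is at least her expected total utility when reporting the alternative bids. -/
open Finset

attribute [local instance] Classical.propDecidable

noncomputable section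

/-- Number of items agent `j` has received in rounds strictly before round `k`
under the outcome `a` (where `a k = some j` means item `k` went to agent `j`). -/
def countBefore {n m : ℕ} (a : Fin m → Option (Fin n)) (j : Fin n) (k : Fin m) : ℕ :=
  (Finset.univ.filter fun k' : Fin m => k' < k ∧ a k' = some j).card

/-- The set of agents feasible for item `k` under the Weighted Balanced LIKE mechanism:
those bidders minimizing (count so far)/weight.  (With all weights equal to 1 this is the
Balanced LIKE mechanism.) -/
def minSet {n m : ℕ} (w : Fin n → ℝ) (B : Fin m → Finset (Fin n))
    (a : Fin m → Option (Fin n)) (k : Fin m) : Finset (Fin n) :=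
  (B k).filter fun j => ∀ l ∈ B k,
    (countBefore a j k : ℝ) / w j ≤ (countBefore a l k : ℝ) / w l

/-- Conditional probability of the allocation decision `a k` made at round `k`,
given the history encoded in `a`. -/
def stepProb {n m : ℕ} (w : Fin n → ℝ) (B : Fin m → Finset (Fin n))
    (a : Fin m → Option (Fin n)) (k : Fin m) : ℝ :=
  if B k = ∅ then (if a k = none then 1 else 0)
  else
    match a k with
    | none => 0
    | some j => if j ∈ minSet w B a k then 1 / (minSet w B a k).card else 0

/-- Probability of the full outcome `a` under the Weighted Balanced LIKE process. -/
def outcomeProb {n m : ℕ} (w : Fin n → ℝ) (B : Fin m → Finset (Fin n))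
    (a : Fin m → Option (Fin n)) : ℝ :=
  ∏ k, stepProb w B a k

/-- Realized utility, w.r.t. the utility function `u`, of agent `j`'s bundle in outcome `a`. -/
def realizedUtil {n m : ℕ} (u : Fin m → ℝ) (a : Fin m → Option (Fin n)) (j : Fin n) : ℝ :=
  ∑ k, if a k = some j then u k else 0

/-- Expected utility, w.r.t. the utility function `u`, of agent `j`'s (random) bundle
under the Weighted Balanced LIKE process. -/
def expUtil {n m : ℕ} (w : Fin n → ℝ) (B : Fin m → Finset (Fin n))
    (u : Fin m → ℝ) (j : Fin n) : ℝ :=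
  ∑ a : Fin m → Option (Fin n), outcomeProb w B a * realizedUtil u a j

/-- Build round-wise bid sets from per-agent bid sets `s` (agent `j` bids on the items
in `s j`). -/
def mkBids {n m : ℕ} (s : Fin n → Finset (Fin m)) : Fin m → Finset (Fin n) :=
  fun k => Finset.univ.filter fun j => k ∈ s j



/-! Conditioning on the first round turns agent 0's expected utility into a recursion `value`
on the two counts `a`, `b`, in which a contested round is a fair `tieBreak` between the load
ratios `a / w 0` and `b / w 1`. Under truthful bidding (and 0/1 utilities) this value is
antitone in her own count, monotone in the rival's, and conceding an item to the rival costs at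
most its utility: `value a (b + 1) ≤ 1 + value (a + 1) b`. Hence, round by round, overbidding on
a worthless item only raises her own count and makes later contests harder, while underbidding
on a wanted item concedes it, so no report beats the truthful one. -/

theorem sum_fun_fin_succ {m : ℕ} {α β : Type*} [Fintype α] [AddCommMonoid β]
    (f : (Fin (m + 1) → α) → β) :
    ∑ a, f a = ∑ x, ∑ a : Fin m → α, f (Fin.cons x a) := by
  rw [← Fintype.sum_prod_type']
  exact (Fintype.sum_equiv (Fin.consEquiv fun _ => α) _ _ fun _ => rfl).symm

section RoundByRound

variable {n m : ℕ} (w : Fin n → ℝ)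

def leastLoaded (c : Fin n → ℕ) (Bs : Finset (Fin n)) : Finset (Fin n) :=
  Bs.filter fun j => ∀ l ∈ Bs, (c j : ℝ) / w j ≤ (c l : ℝ) / w l

/-- The law of the winner of a round in which agent `j` already holds `c j` items and the
agents in `Bs` bid. -/
def roundProb (c : Fin n → ℕ) (Bs : Finset (Fin n)) (x : Option (Fin n)) : ℝ :=
  if Bs = ∅ then (if x = none then 1 else 0)
  else
    match x with
    | none => 0
    | some j => if j ∈ leastLoaded w c Bs then 1 / (leastLoaded w c Bs).card else 0

def credit (c : Fin n → ℕ) (x : Option (Fin n)) : Fin n → ℕ :=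
  fun j => c j + if x = some j then 1 else 0

def outcomeProbFrom (c : Fin n → ℕ) (B : Fin m → Finset (Fin n))
    (a : Fin m → Option (Fin n)) : ℝ :=
  ∏ k, roundProb w (fun j => c j + countBefore a j k) (B k) (a k)

def expUtilFrom (c : Fin n → ℕ) (B : Fin m → Finset (Fin n)) (u : Fin m → ℝ)
    (j : Fin n) : ℝ :=
  ∑ a : Fin m → Option (Fin n), outcomeProbFrom w c B a * realizedUtil u a j

theorem expUtil_eq_expUtilFrom_zero (B : Fin m → Finset (Fin n)) (u : Fin m → ℝ)
    (j : Fin n) : expUtil w B u j = expUtilFrom w 0 B u j := by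
  simp only [expUtil, expUtilFrom, outcomeProb, outcomeProbFrom, Pi.zero_apply, zero_add]
  rfl

theorem sum_roundProb (c : Fin n → ℕ) (Bs : Finset (Fin n)) :
    ∑ x, roundProb w c Bs x = 1 := by
  rw [Fintype.sum_option]
  rcases Bs.eq_empty_or_nonempty with rfl | hBs
  · simp [roundProb]
  obtain ⟨i, hi, hmin⟩ := Bs.exists_min_image (fun j => (c j : ℝ) / w j) hBs
  have hcard : ((leastLoaded w c Bs).card : ℝ) ≠ 0 := by
    exact_mod_cast (Finset.card_pos.mpr ⟨i, Finset.mem_filter.mpr ⟨hi, hmin⟩⟩).ne'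
  simp [roundProb, hBs.ne_empty, Finset.sum_ite_mem, hcard]

theorem countBefore_cons_zero (x : Option (Fin n)) (a : Fin m → Option (Fin n))
    (j : Fin n) : countBefore (Fin.cons x a : Fin (m + 1) → Option (Fin n)) j 0 = 0 := by
  simp [countBefore]

theorem countBefore_cons_succ (x : Option (Fin n)) (a : Fin m → Option (Fin n)) (j : Fin n)
    (k : Fin m) :
    countBefore (Fin.cons x a : Fin (m + 1) → Option (Fin n)) j k.succ =
      (if x = some j then 1 else 0) + countBefore a j k := by
  rw [countBefore, countBefore, Finset.card_filter, Finset.card_filter, Fin.sum_univ_succ]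
  simp [Fin.succ_lt_succ_iff, Fin.succ_pos]

theorem outcomeProbFrom_cons (c : Fin n → ℕ) (B : Fin (m + 1) → Finset (Fin n))
    (x : Option (Fin n)) (a : Fin m → Option (Fin n)) :
    outcomeProbFrom w c B (Fin.cons x a) =
      roundProb w c (B 0) x * outcomeProbFrom w (credit c x) (Fin.tail B) a := by
  rw [outcomeProbFrom, Fin.prod_univ_succ]
  congr 1
  · simp [countBefore_cons_zero]
  · refine Finset.prod_congr rfl fun k _ => ?_
    simp only [countBefore_cons_succ, Fin.cons_succ, credit, add_assoc]
    rfl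

theorem sum_outcomeProbFrom (c : Fin n → ℕ) (B : Fin m → Finset (Fin n)) :
    ∑ a, outcomeProbFrom w c B a = 1 := by
  induction m generalizing c with
  | zero => simp [outcomeProbFrom]
  | succ m ih =>
    simp only [sum_fun_fin_succ, outcomeProbFrom_cons, ← Finset.mul_sum, ih, mul_one,
      sum_roundProb]

theorem realizedUtil_cons (u : Fin (m + 1) → ℝ) (x : Option (Fin n))
    (a : Fin m → Option (Fin n)) (j : Fin n) :
    realizedUtil u (Fin.cons x a) j =
      (if x = some j then u 0 else 0) + realizedUtil (Fin.tail u) a j := by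
  simp [realizedUtil, Fin.sum_univ_succ, Fin.tail]

theorem expUtilFrom_succ (c : Fin n → ℕ) (B : Fin (m + 1) → Finset (Fin n))
    (u : Fin (m + 1) → ℝ) (j : Fin n) :
    expUtilFrom w c B u j = ∑ x, roundProb w c (B 0) x *
      ((if x = some j then u 0 else 0) +
        expUtilFrom w (credit c x) (Fin.tail B) (Fin.tail u) j) := by
  rw [expUtilFrom, sum_fun_fin_succ]
  refine Finset.sum_congr rfl fun x _ => ?_
  have hsplit : ∀ (p q v r : ℝ), p * q * (v + r) = p * v * q + p * (q * r) := fun _ _ _ _ => by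
    ring
  simp only [outcomeProbFrom_cons, realizedUtil_cons, hsplit, Finset.sum_add_distrib,
    ← Finset.mul_sum, sum_outcomeProbFrom, mul_one, expUtilFrom, mul_add]

end RoundByRound

/-- The contest of two bidders with load ratios `x` and `y`, worth `A` if the first wins
and `B` if the second wins; ties are broken by a fair coin. -/
def tieBreak (x y A B : ℝ) : ℝ :=
  if x < y then A else if y < x then B else (A + B) / 2

theorem sum_roundProb_fin_two_mul (w : Fin 2 → ℝ) (c : Fin 2 → ℕ) (Bs : Finset (Fin 2))
    (f : Option (Fin 2) → ℝ) :
    ∑ x, roundProb w c Bs x * f x =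
      if 0 ∈ Bs then
        (if 1 ∈ Bs then tieBreak (c 0 / w 0) (c 1 / w 1) (f (some 0)) (f (some 1))
          else f (some 0))
      else (if 1 ∈ Bs then f (some 1) else f none) := by
  rw [Fintype.sum_option, Fin.sum_univ_two]
  by_cases h0 : 0 ∈ Bs <;> by_cases h1 : 1 ∈ Bs
  · obtain rfl : Bs = Finset.univ := by ext j; fin_cases j <;> simpa
    have hne : (Finset.univ : Finset (Fin 2)) ≠ ∅ := Finset.univ_nonempty.ne_empty
    rcases lt_trichotomy ((c 0 : ℝ) / w 0) ((c 1 : ℝ) / w 1) with h | h | h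
    · have hleast : leastLoaded w c Finset.univ = {0} := by
        ext j; fin_cases j <;> simp [leastLoaded, h.le, h]
      simp [roundProb, hleast, tieBreak, h, hne]
    · have hleast : leastLoaded w c Finset.univ = Finset.univ := by
        ext j; fin_cases j <;> simp [leastLoaded, h.le, h.ge]
      simp [roundProb, hleast, tieBreak, h, hne]
      ring
    · have hleast : leastLoaded w c Finset.univ = {1} := by
        ext j; fin_cases j <;> simp [leastLoaded, h.le, h]
      simp [roundProb, hleast, tieBreak, h, h.not_gt, hne]
  · obtain rfl : Bs = {0} := by ext j; fin_cases j <;> simpa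
    simp [roundProb, leastLoaded, Finset.filter_singleton]
  · obtain rfl : Bs = {1} := by ext j; fin_cases j <;> simpa
    simp [roundProb, leastLoaded, Finset.filter_singleton]
  · obtain rfl : Bs = ∅ := by ext j; fin_cases j <;> simpa
    simp [roundProb]

/-- A round seen from agent 0; the rival is agent 1. -/
structure Round where
  utility : ℝ
  rivalBids : Prop
  bids : Prop

/-- Agent 0's expected utility from the rounds `L` when agents 0 and 1 already hold `a` and
`b` items. -/
def value (w : Fin 2 → ℝ) : List Round → ℕ → ℕ → ℝ
  | [], _, _ => 0
  | R :: L, a, b =>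
    if R.bids then
      if R.rivalBids then
        tieBreak (a / w 0) (b / w 1) (R.utility + value w L (a + 1) b) (value w L a (b + 1))
      else R.utility + value w L (a + 1) b
    else if R.rivalBids then value w L a (b + 1) else value w L a b

def rounds {m : ℕ} (u : Fin m → ℝ) (B : Fin m → Finset (Fin 2)) : List Round :=
  List.ofFn fun k => ⟨u k, 1 ∈ B k, 0 ∈ B k⟩

theorem expUtilFrom_eq_value {m : ℕ} (w : Fin 2 → ℝ) (c : Fin 2 → ℕ)
    (B : Fin m → Finset (Fin 2)) (u : Fin m → ℝ) :
    expUtilFrom w c B u 0 = value w (rounds u B) (c 0) (c 1) := by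
  induction m generalizing c with
  | zero => simp [expUtilFrom, realizedUtil, rounds, value]
  | succ m ih =>
    rw [expUtilFrom_succ, sum_roundProb_fin_two_mul, rounds, List.ofFn_succ]
    by_cases h0 : 0 ∈ B 0 <;> by_cases h1 : 1 ∈ B 0 <;>
      simp [ih, value, credit, rounds, Fin.tail, h0, h1]

section TieBreak

variable {x x' y y' A A' B B' C : ℝ}

theorem tieBreak_le (hA : A ≤ C) (hB : B ≤ C) : tieBreak x y A B ≤ C := by
  unfold tieBreak; split_ifs <;> linarith

theorem le_tieBreak (hA : C ≤ A) (hB : C ≤ B) : C ≤ tieBreak x y A B := by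
  unfold tieBreak; split_ifs <;> linarith

theorem tieBreak_mono (hA : A ≤ A') (hB : B ≤ B') :
    tieBreak x y A B ≤ tieBreak x y A' B' := by
  unfold tieBreak; split_ifs <;> linarith

theorem tieBreak_antitone_left (hBA : B ≤ A) (hx : x ≤ x') :
    tieBreak x' y A B ≤ tieBreak x y A B := by
  unfold tieBreak; split_ifs <;> linarith

theorem tieBreak_monotone_right (hBA : B ≤ A) (hy : y ≤ y') :
    tieBreak x y A B ≤ tieBreak x y' A B := by
  unfold tieBreak; split_ifs <;> linarith

end TieBreak

def truthful (R : Round) : Round := { R with bids := 0 < R.utility }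

section Truthful

variable {w : Fin 2 → ℝ} {L : List Round}

theorem value_map_truthful_le_one_add (hL : ∀ R ∈ L, R.utility = 0 ∨ R.utility = 1)
    (a b : ℕ) :
    value w (L.map truthful) a (b + 1) ≤ 1 + value w (L.map truthful) (a + 1) b := by
  induction L generalizing a b with
  | nil => simp [value]
  | cons R L ih =>
    obtain ⟨v, q, r⟩ := R
    obtain ⟨hv, htail⟩ := List.forall_mem_cons.1 hL
    have ih := ih htail
    rcases hv with rfl | rfl <;> by_cases hq : q <;>
      simp only [List.map_cons, value, truthful, hq, lt_self_iff_false, zero_lt_one, if_true,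
        if_false, Nat.cast_add, Nat.cast_one]
    · exact ih a (b + 1)
    · exact ih a b
    · calc _ ≤ 1 + value w (L.map truthful) (a + 1) (b + 1) :=
            tieBreak_le le_rfl (by linarith [ih a (b + 1)])
        _ ≤ _ := by gcongr; exact le_tieBreak (by linarith [ih (a + 1) b]) le_rfl
    · linarith [ih (a + 1) b]

theorem value_map_truthful_succ_left_le (hw0 : 0 ≤ w 0)
    (hL : ∀ R ∈ L, R.utility = 0 ∨ R.utility = 1) (a b : ℕ) :
    value w (L.map truthful) (a + 1) b ≤ value w (L.map truthful) a b := by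
  induction L generalizing a b with
  | nil => simp [value]
  | cons R L ih =>
    obtain ⟨v, q, r⟩ := R
    obtain ⟨hv, htail⟩ := List.forall_mem_cons.1 hL
    have ih := ih htail
    rcases hv with rfl | rfl <;> by_cases hq : q <;>
      simp only [List.map_cons, value, truthful, hq, lt_self_iff_false, zero_lt_one, if_true,
        if_false, Nat.cast_add, Nat.cast_one]
    · exact ih a (b + 1)
    · exact ih a b
    · exact (tieBreak_mono (by linarith [ih (a + 1) b]) (ih a (b + 1))).trans
        (tieBreak_antitone_left (value_map_truthful_le_one_add htail a b)
          (div_le_div_of_nonneg_right (by linarith) hw0))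
    · linarith [ih (a + 1) b]

theorem value_map_truthful_le_succ_right (hw1 : 0 ≤ w 1)
    (hL : ∀ R ∈ L, R.utility = 0 ∨ R.utility = 1) (a b : ℕ) :
    value w (L.map truthful) a b ≤ value w (L.map truthful) a (b + 1) := by
  induction L generalizing a b with
  | nil => simp [value]
  | cons R L ih =>
    obtain ⟨v, q, r⟩ := R
    obtain ⟨hv, htail⟩ := List.forall_mem_cons.1 hL
    have ih := ih htail
    rcases hv with rfl | rfl <;> by_cases hq : q <;>
      simp only [List.map_cons, value, truthful, hq, lt_self_iff_false, zero_lt_one, if_true,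
        if_false, Nat.cast_add, Nat.cast_one]
    · exact ih a (b + 1)
    · exact ih a b
    · exact (tieBreak_monotone_right (value_map_truthful_le_one_add htail a b)
          (div_le_div_of_nonneg_right (by linarith) hw1)).trans
        (tieBreak_mono (by linarith [ih (a + 1) b]) (ih a (b + 1)))
    · linarith [ih (a + 1) b]

theorem value_le_value_map_truthful (hw0 : 0 ≤ w 0) (hw1 : 0 ≤ w 1)
    (hL : ∀ R ∈ L, R.utility = 0 ∨ R.utility = 1) (a b : ℕ) :
    value w L a b ≤ value w (L.map truthful) a b := by
  induction L generalizing a b with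
  | nil => simp [value]
  | cons R L ih =>
    obtain ⟨v, q, r⟩ := R
    obtain ⟨hv, htail⟩ := List.forall_mem_cons.1 hL
    have ih := ih htail
    have hswap := value_map_truthful_le_one_add (w := w) htail
    have hleft := value_map_truthful_succ_left_le hw0 htail
    have hright := value_map_truthful_le_succ_right hw1 htail
    rcases hv with rfl | rfl <;> by_cases hq : q <;> by_cases hr : r <;>
      simp only [List.map_cons, value, truthful, hq, hr, lt_self_iff_false, zero_lt_one, if_true,
        if_false]
    · -- a worthless item: overbidding at best raises her own count
      exact tieBreak_le (by linarith [ih (a + 1) b, hleft a b, hright a b]) (ih a (b + 1))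
    · exact ih a (b + 1)
    · linarith [ih (a + 1) b, hleft a b]
    · exact ih a b
    · exact tieBreak_mono (by linarith [ih (a + 1) b]) (ih a (b + 1))
    · -- a wanted item: underbidding concedes it to the rival
      exact (ih a (b + 1)).trans (le_tieBreak (hswap a b) le_rfl)
    · linarith [ih (a + 1) b]
    · linarith [ih a b, hright a b, hswap a b]

end Truthful

/-- **The Weighted Balanced LIKE mechanism is strategy-proof for two agents with 0/1
utilities, for arbitrary positive weights.**
With `n = 2` agents having weights `w 0, w 1 > 0` and utilities `u i k ∈ {0,1}`, for
any fixed bid set `S2` of agent 2 and any alternative bid set `S1` that agent 1 could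
report, agent 1's expected total utility (w.r.t. her true utilities `u 0`) under the
Weighted Balanced LIKE process when bidding truthfully (bidding for item `k` iff
`u 0 k > 0`) is at least her expected total utility when reporting `S1`. -/
theorem weightedBalancedLike_strategyproof_two_agents (m : ℕ) (w : Fin 2 → ℝ)
    (hw : ∀ j, 0 < w j) (u : Fin 2 → Fin m → ℝ)
    (h01 : ∀ i k, u i k = 0 ∨ u i k = 1) (S2 S1 : Finset (Fin m)) :
    expUtil w (mkBids ![Finset.univ.filter (fun k => 0 < u 0 k), S2]) (u 0) 0 ≥
      expUtil w (mkBids ![S1, S2]) (u 0) 0 := by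
  have hL : ∀ R ∈ rounds (u 0) (mkBids ![S1, S2]), R.utility = 0 ∨ R.utility = 1 := by
    simp only [rounds, List.mem_ofFn]
    rintro _ ⟨k, rfl⟩
    exact h01 0 k
  have htruthful : (rounds (u 0) (mkBids ![S1, S2])).map truthful =
      rounds (u 0) (mkBids ![Finset.univ.filter (fun k => 0 < u 0 k), S2]) := by
    simp [rounds, List.map_ofFn, truthful, mkBids, Function.comp_def]
  rw [ge_iff_le, expUtil_eq_expUtilFrom_zero, expUtil_eq_expUtilFrom_zero, expUtilFrom_eq_value,
    expUtilFrom_eq_value, ← htruthful]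
  exact value_le_value_map_truthful (hw 0).le (hw 1).le hL _ _

end
end

section
/- The Weighted LIKE mechanism is envy-free ex-ante: with 0/1 utilities and all agents bidding truthfully (so that B_k = {l : u_l(F_k) = 1}), for every pair of agents i and j, E[u_i(A_j)]/w_j ≤ E[u_i(A_i)]/w_i, where E[u_i(A_j)] = ∑_{k : j ∈ B_k} (w_j/∑_{l∈B_k} w_l)·u_i(F_k) and E[u_i(A_i)] = ∑_{k : i ∈ B_k} (w_i/∑_{l∈B_k} w_l)·u_i(F_k). -/
open Finset

attribute [local instance] Classical.propDecidable

/-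
Dividing by `w a`, the weight-normalised share of agent `a` becomes `∑_{k : a ∈ B k} u i k / W k`
with `W k = ∑_{l ∈ B k} w l`, the same summand for every agent `a`. Under truthful 0/1 bidding
the summand is nonnegative and vanishes unless `i ∈ B k`, so agent `j`'s sum is a subsum of agent
`i`'s.
-/

theorem Finset.sum_le_sum_of_ne_zero_of_nonneg {ι M : Type*} [AddCommMonoid M] [PartialOrder M]
    [IsOrderedAddMonoid M] {s t : Finset ι} {f : ι → M} (h : ∀ x ∈ s, f x ≠ 0 → x ∈ t)
    (hf : ∀ x ∈ t, 0 ≤ f x) : ∑ x ∈ s, f x ≤ ∑ x ∈ t, f x := by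
  rw [← sum_filter_ne_zero]
  refine sum_le_sum_of_subset_of_nonneg (fun x hx => ?_) fun x hx _ => hf x hx
  rw [mem_filter] at hx
  exact h x hx.1 hx.2

theorem Finset.sum_div_mul_div_left {ι K : Type*} [Field K] (s : Finset ι) (d f : ι → K)
    {c : K} (hc : c ≠ 0) : (∑ k ∈ s, c / d k * f k) / c = ∑ k ∈ s, f k / d k := by
  rw [sum_div]
  refine sum_congr rfl fun k _ => ?_
  rw [div_mul_eq_mul_div, div_div, mul_comm (d k), mul_div_mul_left _ _ hc]

/-- **The Weighted LIKE mechanism is envy-free ex-ante.**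
There are `n` agents with positive weights `w` and `m` items, with 0/1 utilities
`u i k ∈ {0,1}`.  All agents bid truthfully, so the set of bidders for item `k` is
`B k = {l : u l k = 1}`.  Under the Weighted LIKE mechanism, agent `j ∈ B k` receives
item `k` with probability `w j / ∑_{l ∈ B k} w l`.  Then for every pair of agents
`i, j`: `E[u_i(A_j)]/w_j ≤ E[u_i(A_i)]/w_i`, where
`E[u_i(A_j)] = ∑_{k : j ∈ B k} (w j / ∑_{l ∈ B k} w l) · u i k`. -/
theorem weightedLike_envyFree_exAnte (n m : ℕ) (w : Fin n → ℝ) (hw : ∀ j, 0 < w j)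
    (u : Fin n → Fin m → ℝ) (h01 : ∀ i k, u i k = 0 ∨ u i k = 1)
    (B : Fin m → Finset (Fin n))
    (hB : ∀ k, B k = Finset.univ.filter fun l => u l k = 1)
    (i j : Fin n) :
    (∑ k ∈ Finset.univ.filter (fun k => j ∈ B k),
        (w j / ∑ l ∈ B k, w l) * u i k) / w j ≤
      (∑ k ∈ Finset.univ.filter (fun k => i ∈ B k),
        (w i / ∑ l ∈ B k, w l) * u i k) / w i := by
  rw [sum_div_mul_div_left _ _ _ (hw j).ne', sum_div_mul_div_left _ _ _ (hw i).ne']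
  refine sum_le_sum_of_ne_zero_of_nonneg (fun k _ hk => ?_) fun k _ => ?_
  · have hik : u i k = 1 := (h01 i k).resolve_left (div_ne_zero_iff.mp hk).1
    simp [hB k, hik]
  · have hu : 0 ≤ u i k := by rcases h01 i k with h | h <;> simp [h]
    exact div_nonneg hu (sum_nonneg fun l _ => (hw l).le)
end

section
/- The Balanced LIKE mechanism is envy-free ex-ante: with 0/1 utilities and all agents bidding truthfully, for every pair of agents i and j, agent i's expected utility for agent j's random allocation under the Balanced LIKE process is at most agent i's expected utility for her own random allocation, i.e., E[u_i(A_j)] ≤ E[u_i(A_i)]. -/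
open Finset

attribute [local instance] Classical.propDecidable

noncomputable section

/-!
Fix `i ≠ j` and let `f c` be the expected gain `u_i(A_i) - u_i(A_j)` collected in the remaining
rounds when the current counts are `c`. Backward induction over the rounds shows

* `f c ≥ -(c i - c j)⁺`, and
* `f c + f (c ∘ swap i j) ≥ 0` whenever `c i = c j + 1`.

The second bound is what the first needs at a tie: when `i` and `j` are both minimal bidders,
the two outcomes have gains `+1` and `-1` and lead to count vectors that are swaps of each other.
The second bound itself follows from a case analysis of how the swap moves `i` and `j` in or out
of the set of minimal bidders. All counts start at `0`, so the expected envy is nonnegative.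
-/

open scoped BigOperators

namespace Finset

variable {ι K : Type*} [DecidableEq ι] [Field K] [LinearOrder K] [IsStrictOrderedRing K]
  {s t : Finset ι} {f g : ι → K} {x y : ι}

lemma expect_nonneg_of_pair (hx : x ∈ s) (hy : y ∈ s) (hxy : x ≠ y) (hpair : 0 ≤ f x + f y)
    (hrest : ∀ l ∈ s, l ≠ x → l ≠ y → 0 ≤ f l) : 0 ≤ 𝔼 l ∈ s, f l := by
  rw [expect_eq_sum_div_card, ← add_sum_erase _ _ hx,
    ← add_sum_erase _ _ (mem_erase.mpr ⟨hxy.symm, hy⟩), ← add_assoc]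
  refine div_nonneg (add_nonneg hpair (sum_nonneg fun l hl => ?_)) (Nat.cast_nonneg _)
  simp only [mem_erase] at hl
  exact hrest l hl.2.2 hl.2.1 hl.1

lemma expect_add_expect_nonneg_of_erase_eq (hx : x ∈ s) (hy : y ∈ t)
    (hst : s.erase x = t.erase y) (hxy : 0 ≤ f x + g y)
    (hrest : ∀ l ∈ s.erase x, 0 ≤ f l + g l) : 0 ≤ 𝔼 l ∈ s, f l + 𝔼 l ∈ t, g l := by
  have hcard : #t = #s := by rw [← card_erase_add_one hx, ← card_erase_add_one hy, hst]
  rw [expect_eq_sum_div_card, expect_eq_sum_div_card, hcard, ← add_div, ← add_sum_erase _ _ hx,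
    ← add_sum_erase _ _ hy, ← hst, add_add_add_comm, ← sum_add_distrib]
  exact div_nonneg (add_nonneg hxy (sum_nonneg hrest)) (Nat.cast_nonneg _)

lemma expect_add_expect_insert_nonneg {r : K} (hr : 0 ≤ r) (hx : x ∉ s)
    (hf : ∀ l ∈ s, -r ≤ f l) (hg : r ≤ g x) (hfg : ∀ l ∈ s, 0 ≤ f l + g l) :
    0 ≤ 𝔼 l ∈ s, f l + 𝔼 l ∈ insert x s, g l := by
  rcases s.eq_empty_or_nonempty with rfl | hs
  · simpa using hr.trans hg
  have hk : (0 : K) < #s := by exact_mod_cast hs.card_pos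
  have hF : -(r * #s) ≤ ∑ l ∈ s, f l := by
    simpa [mul_comm] using card_nsmul_le_sum s f (-r) hf
  have hG : 0 ≤ ∑ l ∈ s, f l + ∑ l ∈ s, g l := by
    rw [← sum_add_distrib]
    exact sum_nonneg hfg
  rw [expect_eq_sum_div_card, expect_eq_sum_div_card, sum_insert hx, card_insert_of_notMem hx,
    Nat.cast_add_one, div_add_div _ _ hk.ne' (by positivity)]
  apply div_nonneg _ (by positivity)
  -- the numerator is at least `∑ l ∈ s, f l + r * #s`
  nlinarith

end Finset

namespace BalancedLike

variable {n : ℕ}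

def minBidders (c : Fin n → ℕ) (B : Finset (Fin n)) : Finset (Fin n) :=
  B.filter fun x => ∀ y ∈ B, c x ≤ c y

lemma mem_minBidders {c : Fin n → ℕ} {B : Finset (Fin n)} {x : Fin n} :
    x ∈ minBidders c B ↔ x ∈ B ∧ ∀ y ∈ B, c x ≤ c y :=
  mem_filter

lemma minBidders_nonempty {c : Fin n → ℕ} {B : Finset (Fin n)} (hB : B.Nonempty) :
    (minBidders c B).Nonempty := by
  obtain ⟨x, hx, hmin⟩ := B.exists_min_image c hB
  exact ⟨x, mem_minBidders.mpr ⟨hx, hmin⟩⟩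

/-- The law of one round's decision; `none` means that the item stays unallocated. -/
def choiceProb (c : Fin n → ℕ) (B : Finset (Fin n)) : Option (Fin n) → ℝ
  | none => if B = ∅ then 1 else 0
  | some l => if l ∈ minBidders c B then (#(minBidders c B) : ℝ)⁻¹ else 0

lemma sum_choiceProb (c : Fin n → ℕ) (B : Finset (Fin n)) : ∑ o, choiceProb c B o = 1 := by
  rw [Fintype.sum_option]
  rcases B.eq_empty_or_nonempty with rfl | hB
  · simp [choiceProb, minBidders]
  · have hM := (minBidders_nonempty (c := c) hB).card_pos
    simp [choiceProb, hB.ne_empty, sum_ite_mem, hM.ne']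

def unitCount : Option (Fin n) → Fin n → ℕ
  | none => 0
  | some l => Pi.single l 1

/-- The increase of `u_i(A_i) - u_i(A_j)` caused by the decision `o` on an item with bidders `B`,
when `i` bids exactly for the items she values. -/
def gain (i j : Fin n) (B : Finset (Fin n)) (o : Option (Fin n)) : ℝ :=
  if i ∈ B then (if o = some i then 1 else 0) - (if o = some j then 1 else 0) else 0

def roundValue (i j : Fin n) (B : Finset (Fin n)) (F : (Fin n → ℕ) → ℝ) (c : Fin n → ℕ) : ℝ :=
  ∑ o, choiceProb c B o * (gain i j B o + F (c + unitCount o))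

/-- The expected gain of `i` over `j` in the rounds with bidder sets `Bs`, as a function of the
counts before them. -/
def envyGap (i j : Fin n) (Bs : List (Finset (Fin n))) : (Fin n → ℕ) → ℝ :=
  Bs.foldr (roundValue i j) 0

def branchValue (i j : Fin n) (B : Finset (Fin n)) (F : (Fin n → ℕ) → ℝ) (c : Fin n → ℕ)
    (l : Fin n) : ℝ :=
  gain i j B (some l) + F (c + Pi.single l 1)

section round

variable {i j l : Fin n} {B : Finset (Fin n)} {F : (Fin n → ℕ) → ℝ} {c : Fin n → ℕ}

lemma roundValue_empty : roundValue i j ∅ F c = F c := by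
  simp [roundValue, Fintype.sum_option, choiceProb, minBidders, gain, unitCount]

lemma roundValue_of_nonempty (hB : B.Nonempty) :
    roundValue i j B F c = 𝔼 l ∈ minBidders c B, branchValue i j B F c l := by
  rw [roundValue, Fintype.sum_option, expect_eq_sum_div_card, sum_div]
  simp only [choiceProb, hB.ne_empty, if_false, zero_mul, zero_add, unitCount, ite_mul,
    sum_ite_mem, univ_inter]
  exact sum_congr rfl fun l _ => by rw [inv_mul_eq_div, branchValue]

lemma gain_of_ne (hli : l ≠ i) (hlj : l ≠ j) : gain i j B (some l) = 0 := by
  simp [gain, hli, hlj]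

lemma gain_of_notMem (hi : i ∉ B) (o : Option (Fin n)) : gain i j B o = 0 := by
  simp [gain, hi]

lemma gain_left (hij : i ≠ j) (hi : i ∈ B) : gain i j B (some i) = 1 := by
  simp [gain, hi, hij]

lemma gain_right (hij : i ≠ j) (hi : i ∈ B) : gain i j B (some j) = -1 := by
  simp [gain, hi, hij.symm]

end round

section swap

variable {i j l : Fin n} {c : Fin n → ℕ}

lemma comp_swap_apply (x : Fin n) :
    (c ∘ Equiv.swap i j) x = if x = i then c j else if x = j then c i else c x := by
  simp only [Function.comp_apply, Equiv.swap_apply_def]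
  split_ifs <;> rfl

lemma comp_swap_eq_self (h : c i = c j) : c ∘ Equiv.swap i j = c := by
  funext x
  simp only [comp_swap_apply]
  split_ifs <;> simp_all

lemma add_single_comp_swap :
    (c + Pi.single l 1) ∘ Equiv.swap i j = c ∘ Equiv.swap i j + Pi.single (Equiv.swap i j l) 1 := by
  funext x
  simp [Pi.single_apply, Equiv.swap_apply_eq_iff]

lemma comp_swap_add_single_left (h : c i = c j + 1) :
    c ∘ Equiv.swap i j + Pi.single i 1 = c + Pi.single j 1 := by
  have hij : i ≠ j := by rintro rfl; omega
  have : (c + Pi.single j 1 : Fin n → ℕ) i = (c + Pi.single j 1 : Fin n → ℕ) j := by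
    simp [hij, h]
  rw [← comp_swap_eq_self this, add_single_comp_swap, Equiv.swap_apply_right]

end swap

section minBidders_comp_swap

variable {i j : Fin n} {B : Finset (Fin n)} {c : Fin n → ℕ}

lemma mem_minBidders_comp_swap_left (hc : c i = c j + 1) (hi : i ∈ B)
    (hjM : j ∈ minBidders c B) : i ∈ minBidders (c ∘ Equiv.swap i j) B := by
  simp only [mem_minBidders, comp_swap_apply, ↓reduceIte] at hjM ⊢
  grind

lemma erase_minBidders_comp_swap (hc : c i = c j + 1) (hi : i ∈ B) (hjM : j ∈ minBidders c B) :
    (minBidders (c ∘ Equiv.swap i j) B).erase i = (minBidders c B).erase j := by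
  ext l
  simp only [mem_erase, mem_minBidders, comp_swap_apply] at hjM ⊢
  grind

lemma minBidders_comp_swap_eq_singleton (hc : c i = c j + 1) (hiM : i ∈ minBidders c B) :
    minBidders (c ∘ Equiv.swap i j) B = {i} := by
  ext l
  simp only [mem_singleton, mem_minBidders, comp_swap_apply] at hiM ⊢
  grind

lemma minBidders_comp_swap_eq_insert (hc : c i = c j + 1) (hiM : i ∉ minBidders c B)
    (hjM : j ∉ minBidders c B) (hiM' : i ∈ minBidders (c ∘ Equiv.swap i j) B) :
    minBidders (c ∘ Equiv.swap i j) B = insert i (minBidders c B) := by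
  ext l
  simp only [mem_insert, mem_minBidders, comp_swap_apply, ↓reduceIte] at hiM hjM hiM' ⊢
  grind

lemma minBidders_eq_singleton_of_comp_swap (hc : c i = c j + 1)
    (hjM' : j ∈ minBidders (c ∘ Equiv.swap i j) B) : minBidders c B = {j} := by
  ext l
  simp only [mem_singleton, mem_minBidders, comp_swap_apply, ↓reduceIte] at hjM' ⊢
  grind

lemma minBidders_eq_insert_of_comp_swap (hc : c i = c j + 1) (hi : i ∉ B)
    (hjM : j ∈ minBidders c B) (hjM' : j ∉ minBidders (c ∘ Equiv.swap i j) B) :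
    minBidders c B = insert j (minBidders (c ∘ Equiv.swap i j) B) := by
  ext l
  simp only [mem_insert, mem_minBidders, comp_swap_apply, ↓reduceIte] at hjM hjM' ⊢
  grind

lemma minBidders_comp_swap_eq (hc : c i = c j + 1) (hj : j ∉ minBidders c B)
    (hi' : i ∉ minBidders (c ∘ Equiv.swap i j) B) :
    minBidders (c ∘ Equiv.swap i j) B = minBidders c B := by
  ext l
  simp only [mem_minBidders, comp_swap_apply, ↓reduceIte] at hj hi' ⊢
  grind (splits := 20)

end minBidders_comp_swap

/-- The invariant of the backward induction; `(c i - c j : ℕ)` is the truncated difference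
`(c i - c j)⁺`. -/
structure GapBound (i j : Fin n) (F : (Fin n → ℕ) → ℝ) : Prop where
  lower : ∀ c, -((c i - c j : ℕ) : ℝ) ≤ F c
  pair : ∀ c, c i = c j + 1 → 0 ≤ F c + F (c ∘ Equiv.swap i j)

lemma gapBound_zero (i j : Fin n) : GapBound i j 0 where
  lower c := by simp
  pair c _ := by simp

namespace GapBound

variable {i j l : Fin n} {B : Finset (Fin n)} {F : (Fin n → ℕ) → ℝ} {c : Fin n → ℕ}

lemma nonneg_add_single_right (hF : GapBound i j F) (hc : c i = c j + 1) :
    0 ≤ F (c + Pi.single j 1) := by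
  have hij : i ≠ j := by rintro rfl; omega
  have h := hF.lower (c + Pi.single j 1)
  simp only [Pi.add_apply, Pi.single_eq_same, Pi.single_eq_of_ne hij, hc] at h
  simpa using h

lemma lower_branchValue (hF : GapBound i j F) (hij : i ≠ j) (hl : l ∈ minBidders c B)
    (htie : l = j → i ∈ B → c i ≠ c j) :
    -((c i - c j : ℕ) : ℝ) ≤ branchValue i j B F c l := by
  have hF' := hF.lower (c + Pi.single l 1)
  obtain ⟨hlB, hlmin⟩ := mem_minBidders.mp hl
  unfold branchValue
  by_cases hli : l = i
  · subst hli
    have : ((c l + 1 - c j : ℕ) : ℝ) ≤ (c l - c j : ℕ) + 1 := by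
      exact_mod_cast (by omega : c l + 1 - c j ≤ c l - c j + 1)
    simp only [Pi.add_apply, Pi.single_eq_same, Pi.single_eq_of_ne hij.symm, add_zero] at hF'
    rw [gain_left hij hlB]
    linarith
  by_cases hlj : l = j
  · subst hlj
    simp only [Pi.add_apply, Pi.single_eq_same, Pi.single_eq_of_ne hij, add_zero] at hF'
    by_cases hi : i ∈ B
    · have hlt : c l < c i := lt_of_le_of_ne (hlmin i hi) (htie rfl hi).symm
      have : ((c i - (c l + 1) : ℕ) : ℝ) + 1 = (c i - c l : ℕ) := by
        exact_mod_cast (by omega : c i - (c l + 1) + 1 = c i - c l)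
      rw [gain_right hij hi]
      linarith
    · have : ((c i - (c l + 1) : ℕ) : ℝ) ≤ (c i - c l : ℕ) := by
        exact_mod_cast Nat.sub_le_sub_left (Nat.le_succ _) _
      rw [gain_of_notMem hi]
      linarith
  · simp only [Pi.add_apply, Pi.single_eq_of_ne (Ne.symm hli), Pi.single_eq_of_ne (Ne.symm hlj),
      add_zero] at hF'
    rwa [gain_of_ne hli hlj, zero_add]

lemma lower_roundValue (hF : GapBound i j F) (hij : i ≠ j) (c : Fin n → ℕ) :
    -((c i - c j : ℕ) : ℝ) ≤ roundValue i j B F c := by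
  rcases B.eq_empty_or_nonempty with rfl | hB
  · rw [roundValue_empty]
    exact hF.lower c
  rw [roundValue_of_nonempty hB]
  by_cases htie : i ∈ minBidders c B ∧ j ∈ minBidders c B
  · obtain ⟨hiM, hjM⟩ := htie
    obtain ⟨hi, himin⟩ := mem_minBidders.mp hiM
    obtain ⟨hj, hjmin⟩ := mem_minBidders.mp hjM
    have hcij : c i = c j := le_antisymm (himin j hj) (hjmin i hi)
    rw [hcij, Nat.sub_self, Nat.cast_zero, neg_zero]
    refine expect_nonneg_of_pair hiM hjM hij ?_ fun l hl hli hlj => ?_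
    · have hswap := hF.pair (c + Pi.single i 1) (by simp [hij.symm, hcij])
      rw [add_single_comp_swap, Equiv.swap_apply_left, comp_swap_eq_self hcij] at hswap
      simp only [branchValue, gain_left hij hi, gain_right hij hi]
      linarith
    · simpa [hcij] using hF.lower_branchValue hij hl fun h => absurd h hlj
  · refine le_expect (minBidders_nonempty hB) fun l hl => hF.lower_branchValue hij hl ?_
    rintro rfl hi hcij
    exact htie ⟨mem_minBidders.mpr ⟨hi, fun y hy => hcij ▸ (mem_minBidders.mp hl).2 y hy⟩, hl⟩

lemma pair_branchValue (hF : GapBound i j F) (hc : c i = c j + 1) (hli : l ≠ i) (hlj : l ≠ j) :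
    0 ≤ branchValue i j B F c l + branchValue i j B F (c ∘ Equiv.swap i j) l := by
  have hswap := hF.pair (c + Pi.single l 1) (by simp [hli.symm, hlj.symm, hc])
  rw [add_single_comp_swap, Equiv.swap_apply_of_ne_of_ne hli hlj] at hswap
  simpa [branchValue, gain_of_ne hli hlj] using hswap

lemma pair_roundValue_of_minBidders_eq (hF : GapBound i j F) (hc : c i = c j + 1)
    (hM : minBidders (c ∘ Equiv.swap i j) B = minBidders c B) (hi : i ∉ minBidders c B)
    (hj : j ∉ minBidders c B) :
    0 ≤ roundValue i j B F c + roundValue i j B F (c ∘ Equiv.swap i j) := by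
  rcases B.eq_empty_or_nonempty with rfl | hB
  · simpa [roundValue_empty] using hF.pair c hc
  rw [roundValue_of_nonempty hB, roundValue_of_nonempty hB, hM, ← expect_add_distrib]
  exact expect_nonneg fun l hl =>
    hF.pair_branchValue hc (fun h => hi (h ▸ hl)) (fun h => hj (h ▸ hl))

/-- Allocating to `j` from `c` and allocating to `i` from the swapped counts lead to the same
counts, with opposite gains. -/
lemma pair_roundValue_of_right_mem_minBidders (hF : GapBound i j F) (hij : i ≠ j)
    (hc : c i = c j + 1) (hi : i ∈ B) (hjM : j ∈ minBidders c B) :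
    0 ≤ roundValue i j B F c + roundValue i j B F (c ∘ Equiv.swap i j) := by
  have hiM : i ∉ minBidders c B := fun h => by
    have := (mem_minBidders.mp h).2 j (mem_minBidders.mp hjM).1
    omega
  rw [roundValue_of_nonempty ⟨i, hi⟩, roundValue_of_nonempty ⟨i, hi⟩]
  refine expect_add_expect_nonneg_of_erase_eq hjM (mem_minBidders_comp_swap_left hc hi hjM)
    (erase_minBidders_comp_swap hc hi hjM).symm ?_ fun l hl => ?_
  · simp only [branchValue, gain_left hij hi, gain_right hij hi, comp_swap_add_single_left hc]
    linarith [hF.nonneg_add_single_right hc]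
  · obtain ⟨hlj, hlM⟩ := mem_erase.mp hl
    exact hF.pair_branchValue hc (fun h => hiM (h ▸ hlM)) hlj

lemma pair_roundValue_of_left_mem_minBidders (hF : GapBound i j F) (hij : i ≠ j)
    (hc : c i = c j + 1) (hiM : i ∈ minBidders c B) :
    0 ≤ roundValue i j B F c + roundValue i j B F (c ∘ Equiv.swap i j) := by
  have hi : i ∈ B := (mem_minBidders.mp hiM).1
  have hlow := hF.lower_roundValue (B := B) hij c
  rw [hc, Nat.add_sub_cancel_left, Nat.cast_one] at hlow
  rw [roundValue_of_nonempty (c := c ∘ Equiv.swap i j) ⟨i, hi⟩,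
    minBidders_comp_swap_eq_singleton hc hiM, expect_singleton, branchValue, gain_left hij hi,
    comp_swap_add_single_left hc]
  linarith [hF.nonneg_add_single_right hc]

lemma pair_roundValue_of_left_mem_minBidders_swap (hF : GapBound i j F) (hij : i ≠ j)
    (hc : c i = c j + 1) (hiM : i ∉ minBidders c B) (hjM : j ∉ minBidders c B)
    (hiM' : i ∈ minBidders (c ∘ Equiv.swap i j) B) :
    0 ≤ roundValue i j B F c + roundValue i j B F (c ∘ Equiv.swap i j) := by
  have hi : i ∈ B := (mem_minBidders.mp hiM').1
  rw [roundValue_of_nonempty ⟨i, hi⟩, roundValue_of_nonempty ⟨i, hi⟩,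
    minBidders_comp_swap_eq_insert hc hiM hjM hiM']
  refine expect_add_expect_insert_nonneg zero_le_one hiM (fun l hl => ?_) ?_ fun l hl => ?_
  · simpa [hc] using hF.lower_branchValue hij hl fun h => absurd (h ▸ hl) hjM
  · simp only [branchValue, gain_left hij hi, comp_swap_add_single_left hc]
    linarith [hF.nonneg_add_single_right hc]
  · exact hF.pair_branchValue hc (fun h => hiM (h ▸ hl)) (fun h => hjM (h ▸ hl))

lemma pair_roundValue_of_right_mem_minBidders_swap (hF : GapBound i j F) (hij : i ≠ j)
    (hc : c i = c j + 1) (hjM' : j ∈ minBidders (c ∘ Equiv.swap i j) B) :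
    0 ≤ roundValue i j B F c + roundValue i j B F (c ∘ Equiv.swap i j) := by
  have hj : j ∈ B := (mem_minBidders.mp hjM').1
  have hi : i ∉ B := fun hi => by
    have := (mem_minBidders.mp hjM').2 i hi
    simp only [Function.comp_apply, Equiv.swap_apply_left, Equiv.swap_apply_right] at this
    omega
  have hlow := hF.lower_roundValue (B := B) hij (c ∘ Equiv.swap i j)
  simp only [Function.comp_apply, Equiv.swap_apply_left, Equiv.swap_apply_right, hc,
    Nat.sub_eq_zero_of_le (Nat.le_succ _), Nat.cast_zero, neg_zero] at hlow
  rw [roundValue_of_nonempty (c := c) ⟨j, hj⟩, minBidders_eq_singleton_of_comp_swap hc hjM',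
    expect_singleton, branchValue, gain_of_notMem hi]
  linarith [hF.nonneg_add_single_right hc]

lemma pair_roundValue_of_right_mem_minBidders_of_notMem (hF : GapBound i j F) (hij : i ≠ j)
    (hc : c i = c j + 1) (hi : i ∉ B) (hjM : j ∈ minBidders c B)
    (hjM' : j ∉ minBidders (c ∘ Equiv.swap i j) B) :
    0 ≤ roundValue i j B F c + roundValue i j B F (c ∘ Equiv.swap i j) := by
  have hB : B.Nonempty := ⟨j, (mem_minBidders.mp hjM).1⟩
  rw [roundValue_of_nonempty hB, roundValue_of_nonempty hB,
    minBidders_eq_insert_of_comp_swap hc hi hjM hjM', add_comm]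
  refine expect_add_expect_insert_nonneg le_rfl hjM' (fun l hl => ?_) ?_ fun l hl => ?_
  · simpa [comp_swap_apply, hij.symm, hc] using
      hF.lower_branchValue hij hl fun h => absurd (h ▸ hl) hjM'
  · simpa [branchValue, gain_of_notMem hi] using hF.nonneg_add_single_right hc
  · have hli : l ≠ i := fun h => hi (h ▸ (mem_minBidders.mp hl).1)
    rw [add_comm]
    exact hF.pair_branchValue hc hli fun h => hjM' (h ▸ hl)

lemma pair_roundValue (hF : GapBound i j F) (hij : i ≠ j) (hc : c i = c j + 1) :
    0 ≤ roundValue i j B F c + roundValue i j B F (c ∘ Equiv.swap i j) := by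
  by_cases hi : i ∈ B
  · by_cases hjM : j ∈ minBidders c B
    · exact hF.pair_roundValue_of_right_mem_minBidders hij hc hi hjM
    by_cases hiM : i ∈ minBidders c B
    · exact hF.pair_roundValue_of_left_mem_minBidders hij hc hiM
    by_cases hiM' : i ∈ minBidders (c ∘ Equiv.swap i j) B
    · exact hF.pair_roundValue_of_left_mem_minBidders_swap hij hc hiM hjM hiM'
    exact hF.pair_roundValue_of_minBidders_eq hc (minBidders_comp_swap_eq hc hjM hiM') hiM hjM
  · have hiM (c' : Fin n → ℕ) : i ∉ minBidders c' B := fun h => hi (mem_minBidders.mp h).1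
    by_cases hjM' : j ∈ minBidders (c ∘ Equiv.swap i j) B
    · exact hF.pair_roundValue_of_right_mem_minBidders_swap hij hc hjM'
    by_cases hjM : j ∈ minBidders c B
    · exact hF.pair_roundValue_of_right_mem_minBidders_of_notMem hij hc hi hjM hjM'
    exact hF.pair_roundValue_of_minBidders_eq hc (minBidders_comp_swap_eq hc hjM (hiM _))
      (hiM c) hjM

protected lemma roundValue (hF : GapBound i j F) (hij : i ≠ j) :
    GapBound i j (roundValue i j B F) where
  lower := hF.lower_roundValue hij
  pair _ hc := hF.pair_roundValue hij hc

end GapBound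

lemma gapBound_envyGap {i j : Fin n} (hij : i ≠ j) (Bs : List (Finset (Fin n))) :
    GapBound i j (envyGap i j Bs) := by
  induction Bs with
  | nil => exact gapBound_zero i j
  | cons B Bs ih => exact ih.roundValue hij

lemma envyGap_nonneg {i j : Fin n} (hij : i ≠ j) (Bs : List (Finset (Fin n))) :
    0 ≤ envyGap i j Bs 0 := by
  simpa using (gapBound_envyGap hij Bs).lower 0

section path

variable {m : ℕ}

/-- The probability of the decisions `a` when the counts before the first round are `c`. -/
def pathProb (c : Fin n → ℕ) (B : Fin m → Finset (Fin n)) (a : Fin m → Option (Fin n)) : ℝ :=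
  ∏ k, choiceProb (c + fun x => countBefore a x k) (B k) (a k)

lemma minSet_one (B : Fin m → Finset (Fin n)) (a : Fin m → Option (Fin n)) (k : Fin m) :
    minSet (fun _ => 1) B a k = minBidders (fun x => countBefore a x k) (B k) := by
  simp only [minSet, minBidders, div_one, Nat.cast_le]

lemma outcomeProb_one (B : Fin m → Finset (Fin n)) (a : Fin m → Option (Fin n)) :
    outcomeProb (fun _ => 1) B a = pathProb 0 B a := by
  refine prod_congr rfl fun k _ => ?_
  rw [zero_add, stepProb, minSet_one]
  rcases a k with _ | l
  · rfl
  · by_cases hB : B k = ∅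
    · simp [hB, choiceProb, minBidders]
    · simp [hB, choiceProb]

lemma countBefore_cons_zero (o : Option (Fin n)) (a : Fin m → Option (Fin n)) (x : Fin n) :
    countBefore (Fin.cons o a : Fin (m + 1) → Option (Fin n)) x 0 = 0 := by
  simp [countBefore]

lemma countBefore_cons_succ (o : Option (Fin n)) (a : Fin m → Option (Fin n)) (x : Fin n)
    (k : Fin m) :
    countBefore (Fin.cons o a : Fin (m + 1) → Option (Fin n)) x k.succ
      = unitCount o x + countBefore a x k := by
  rw [countBefore, card_filter, Fin.sum_univ_succ, countBefore, card_filter]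
  congr 1
  · rcases o with _ | l <;> simp [unitCount, Pi.single_apply, eq_comm]
  · simp [Fin.succ_lt_succ_iff]

lemma pathProb_cons (c : Fin n → ℕ) (B : Fin (m + 1) → Finset (Fin n)) (o : Option (Fin n))
    (a : Fin m → Option (Fin n)) :
    pathProb c B (Fin.cons o a)
      = choiceProb c (B 0) o * pathProb (c + unitCount o) (Fin.tail B) a := by
  rw [pathProb, Fin.prod_univ_succ]
  congr 1
  · simp only [countBefore_cons_zero, Fin.cons_zero, ← Pi.zero_def, add_zero]
  · refine prod_congr rfl fun k _ => ?_
    simp only [Fin.cons_succ, countBefore_cons_succ, add_assoc]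
    rfl

lemma sum_pi_fin_succ {α : Type*} [Fintype α] (f : (Fin (m + 1) → α) → ℝ) :
    ∑ a, f a = ∑ o, ∑ a : Fin m → α, f (Fin.cons o a) := by
  rw [← (Fin.consEquiv fun _ => α).sum_comp, Fintype.sum_prod_type]
  rfl

lemma sum_pathProb (c : Fin n → ℕ) (B : Fin m → Finset (Fin n)) : ∑ a, pathProb c B a = 1 := by
  induction m generalizing c with
  | zero => simp [pathProb]
  | succ m ih =>
    simp_rw [sum_pi_fin_succ, pathProb_cons, ← mul_sum, ih, mul_one]
    exact sum_choiceProb c (B 0)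

lemma sum_pathProb_mul_sum_gain (i j : Fin n) (c : Fin n → ℕ) (B : Fin m → Finset (Fin n)) :
    ∑ a, pathProb c B a * ∑ k, gain i j (B k) (a k) = envyGap i j (List.ofFn B) c := by
  induction m generalizing c with
  | zero => simp [envyGap]
  | succ m ih =>
    rw [sum_pi_fin_succ, List.ofFn_succ, envyGap, List.foldr_cons, roundValue]
    refine sum_congr rfl fun o _ => ?_
    simp_rw [pathProb_cons, Fin.sum_univ_succ, Fin.cons_zero, Fin.cons_succ, mul_assoc, ← mul_sum,
      mul_add, sum_add_distrib, ← sum_mul, sum_pathProb, one_mul]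
    rw [← envyGap, ← ih, mul_add]
    rfl

end path

section utility

variable {m : ℕ} {u : Fin m → ℝ} {B : Fin m → Finset (Fin n)} {i : Fin n}

lemma realizedUtil_sub_eq_sum_gain (hu : ∀ k, u k = if i ∈ B k then 1 else 0)
    (a : Fin m → Option (Fin n)) (j : Fin n) :
    realizedUtil u a i - realizedUtil u a j = ∑ k, gain i j (B k) (a k) := by
  rw [realizedUtil, realizedUtil, ← sum_sub_distrib]
  refine sum_congr rfl fun k _ => ?_
  rw [hu k, gain]
  split_ifs <;> simp

lemma expUtil_sub_eq_envyGap (hu : ∀ k, u k = if i ∈ B k then 1 else 0) (j : Fin n) :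
    expUtil (fun _ => 1) B u i - expUtil (fun _ => 1) B u j = envyGap i j (List.ofFn B) 0 := by
  rw [expUtil, expUtil, ← sum_sub_distrib, ← sum_pathProb_mul_sum_gain]
  refine sum_congr rfl fun a _ => ?_
  rw [← mul_sub, realizedUtil_sub_eq_sum_gain hu, outcomeProb_one]

end utility

end BalancedLike

/-- **The Balanced LIKE mechanism is envy-free ex-ante.**
With 0/1 utilities and all agents bidding truthfully (the bidders for item `k` are
exactly the agents `l` with `u l k > 0`), for every pair of agents `i` and `j`, agent
`i`'s expected utility for agent `j`'s random allocation under the Balanced LIKE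
process (the Weighted Balanced LIKE process with all weights `1`) is at most agent
`i`'s expected utility for her own random allocation: `E[u_i(A_j)] ≤ E[u_i(A_i)]`. -/
theorem balancedLike_envyFree_exAnte (n m : ℕ) (u : Fin n → Fin m → ℝ)
    (h01 : ∀ i k, u i k = 0 ∨ u i k = 1) (B : Fin m → Finset (Fin n))
    (hB : ∀ k, B k = Finset.univ.filter fun l => 0 < u l k) (i j : Fin n) :
    expUtil (fun _ => (1 : ℝ)) B (u i) j ≤ expUtil (fun _ => (1 : ℝ)) B (u i) i := by
  rcases eq_or_ne i j with rfl | hij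
  · exact le_rfl
  have hu : ∀ k, u i k = if i ∈ B k then 1 else 0 := fun k => by
    rcases h01 i k with h | h <;> simp [hB, h]
  have hgap := BalancedLike.expUtil_sub_eq_envyGap hu j
  linarith [BalancedLike.envyGap_nonneg hij (List.ofFn B)]
end
end
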